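/- (Christoffel–Darboux identity) For any weighted graph G and any two distinct vertices i and j, the polynomial identity μ(G∖i)(x)·μ(G∖j)(x) − μ(G∖{i,j})(x)·μ(G)(x) = Σ_{c ∈ [i→j]} λ_c · μ(G∖c)(x)² holds. -/

import Mathlib

/-!
Expanding `μ(A)` along the edges at a vertex `i` gives
`μ(A) = (x - r_i) μ(A∖i) + ∑_k λ_{ik} μ(A∖{i,k})`. Substituting this for `μ(A)` and `μ(A∖j)`
writes the left-hand side as `-λ_{ij} μ(A∖{i,j})²` plus `∑_{k ≠ j} (-λ_{ik})` times the left-hand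
side for the graph `A∖i` and the pair `k, j`. Paths from `i` to `j` split in the same way
according to their second vertex `k`, so the identity follows by induction on `|A|`.
-/

open Polynomial
open scoped Classical

/-- A matching of the weighted graph with edge weights `lam`, inside the vertex set `A`:
a set of pairs `(j,k)` with `j < k`, `lam j k ≠ 0`, endpoints in `A`,
no two pairs sharing a vertex. -/
def IsMatching {n : ℕ} (lam : Fin n → Fin n → ℝ) (A : Finset (Fin n))
    (M : Finset (Fin n × Fin n)) : Prop :=
  (∀ e ∈ M, e.1 < e.2 ∧ lam e.1 e.2 ≠ 0 ∧ e.1 ∈ A ∧ e.2 ∈ A) ∧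
  ∀ e ∈ M, ∀ f ∈ M, e ≠ f → e.1 ≠ f.1 ∧ e.1 ≠ f.2 ∧ e.2 ≠ f.1 ∧ e.2 ≠ f.2

/-- The vertices covered by a matching. -/
def mVerts {n : ℕ} (M : Finset (Fin n × Fin n)) : Finset (Fin n) :=
  M.image Prod.fst ∪ M.image Prod.snd

/-- The finite set of matchings inside the vertex set `A`. -/
noncomputable def matchings {n : ℕ} (lam : Fin n → Fin n → ℝ) (A : Finset (Fin n)) :
    Finset (Finset (Fin n × Fin n)) :=
  Finset.univ.filter fun M => IsMatching lam A M

/-- The weighted matching polynomial of the induced weighted subgraph on the vertex set `A`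
(the matching polynomial of the empty graph is `1`). -/
noncomputable def mu {n : ℕ} (r : Fin n → ℝ) (lam : Fin n → Fin n → ℝ)
    (A : Finset (Fin n)) : Polynomial ℝ :=
  ∑ M ∈ matchings lam A,
    (∏ i ∈ A \ mVerts M, (X - C (r i))) * C (∏ e ∈ M, lam e.1 e.2)

/-- The multivariate matching polynomial evaluated at the complex numbers `x 1, …, x n`. -/
noncomputable def muC {n : ℕ} (lam : Fin n → Fin n → ℝ) (x : Fin n → ℂ) : ℂ :=
  ∑ M ∈ matchings lam (Finset.univ : Finset (Fin n)),
    (∏ i ∈ Finset.univ \ mVerts M, x i) * ∏ e ∈ M, (lam e.1 e.2 : ℂ)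

/-- The constant `B_G`: for `n ≥ 3` the maximum over vertices `j` and sets
`A ⊆ [n] ∖ {j}` with `|A| = n - 2` of `∑_{k ∈ A} (-λ_{jk})`; `-λ_{12}/4` for `n = 2`;
`0` for `n = 1`. -/
noncomputable def BG (n : ℕ) (lam : Fin n → Fin n → ℝ) : ℝ :=
  if 3 ≤ n then
    sSup {S : ℝ | ∃ j : Fin n, ∃ A : Finset (Fin n),
      j ∉ A ∧ A.card = n - 2 ∧ S = ∑ k ∈ A, -lam j k}
  else if h : n = 2 then -lam ⟨0, by omega⟩ ⟨1, by omega⟩ / 4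
  else 0

/-- `l` is a path from `i` to `j` inside the vertex set `A`: a nonempty list of distinct
vertices of `A`, starting at `i`, ending at `j`, with consecutive vertices joined by
edges of nonzero weight. -/
def IsPathIn {n : ℕ} (lam : Fin n → Fin n → ℝ) (A : Finset (Fin n)) (i j : Fin n)
    (l : List (Fin n)) : Prop :=
  l ≠ [] ∧ l.Nodup ∧ (∀ v ∈ l, v ∈ A) ∧ l.head? = some i ∧ l.getLast? = some j ∧
    l.Chain' fun u v => lam u v ≠ 0

/-- `λ_c`: the product of `-λ_e` over the edges `e` of the path `c` (equal to `1` for a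
trivial path). -/
def pathWeight {n : ℕ} (lam : Fin n → Fin n → ℝ) (l : List (Fin n)) : ℝ :=
  ((l.zip l.tail).map fun p => -lam p.1 p.2).prod

/-- A real polynomial viewed as a rational function. -/
noncomputable def toRF (p : Polynomial ℝ) : RatFunc ℝ :=
  algebraMap (Polynomial ℝ) (RatFunc ℝ) p

/-- The graph continued fraction `α_v = μ(A)/μ(A ∖ v)` as a rational function. -/
noncomputable def alpha {n : ℕ} (r : Fin n → ℝ) (lam : Fin n → Fin n → ℝ) (v : Fin n)
    (A : Finset (Fin n)) : RatFunc ℝ :=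
  toRF (mu r lam A) / toRF (mu r lam (A.erase v))

/-- `λ_{i∼j} = -(∑_{c ∈ [i→j]} λ_c · μ(A∖c)²) / μ(A∖{i,j})²` as a rational function. -/
noncomputable def lamSim {n : ℕ} (r : Fin n → ℝ) (lam : Fin n → Fin n → ℝ) (i j : Fin n)
    (A : Finset (Fin n)) : RatFunc ℝ :=
  -(∑ᶠ l ∈ {l : List (Fin n) | IsPathIn lam A i j l},
      toRF (C (pathWeight lam l) * mu r lam (A \ l.toFinset) ^ 2)) /
    toRF (mu r lam ((A.erase i).erase j)) ^ 2

/-- The value of a rational function at `θ`, taken after cancelling common factors;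
`none` encodes the value `∞` (a pole). -/
noncomputable def valAt (f : RatFunc ℝ) (θ : ℝ) : Option ℝ :=
  if f.denom.eval θ = 0 then none else some (f.num.eval θ / f.denom.eval θ)

/-- The set `0_{θ,A}` of θ-essential vertices: `m_θ(A∖v) = m_θ(A) - 1`. -/
def zeroSet {n : ℕ} (r : Fin n → ℝ) (lam : Fin n → Fin n → ℝ) (θ : ℝ)
    (A : Finset (Fin n)) : Set (Fin n) :=
  {v | v ∈ A ∧
    (mu r lam A).rootMultiplicity θ = (mu r lam (A.erase v)).rootMultiplicity θ + 1}

/-- The set `∞_{θ,A}`: `m_θ(A∖v) = m_θ(A) + 1`. -/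
def infSet {n : ℕ} (r : Fin n → ℝ) (lam : Fin n → Fin n → ℝ) (θ : ℝ)
    (A : Finset (Fin n)) : Set (Fin n) :=
  {v | v ∈ A ∧
    (mu r lam (A.erase v)).rootMultiplicity θ = (mu r lam A).rootMultiplicity θ + 1}

/-- The set `+_{θ,A}`: `m_θ(A∖v) = m_θ(A)` and `α_v(A)(θ) > 0`. -/
def plusSet {n : ℕ} (r : Fin n → ℝ) (lam : Fin n → Fin n → ℝ) (θ : ℝ)
    (A : Finset (Fin n)) : Set (Fin n) :=
  {v | v ∈ A ∧
    (mu r lam (A.erase v)).rootMultiplicity θ = (mu r lam A).rootMultiplicity θ ∧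
    ∃ t : ℝ, valAt (alpha r lam v A) θ = some t ∧ 0 < t}

/-- The set `−_{θ,A}`: `m_θ(A∖v) = m_θ(A)` and `α_v(A)(θ) < 0`. -/
def minusSet {n : ℕ} (r : Fin n → ℝ) (lam : Fin n → Fin n → ℝ) (θ : ℝ)
    (A : Finset (Fin n)) : Set (Fin n) :=
  {v | v ∈ A ∧
    (mu r lam (A.erase v)).rootMultiplicity θ = (mu r lam A).rootMultiplicity θ ∧
    ∃ t : ℝ, valAt (alpha r lam v A) θ = some t ∧ t < 0}

/-- The frontier `∂0_{θ,A}`: vertices not in `0_{θ,A}` with a neighbor in `0_{θ,A}`. -/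
def frontierZero {n : ℕ} (r : Fin n → ℝ) (lam : Fin n → Fin n → ℝ) (θ : ℝ)
    (A : Finset (Fin n)) : Set (Fin n) :=
  {v | v ∈ A ∧ v ∉ zeroSet r lam θ A ∧ ∃ w ∈ zeroSet r lam θ A, lam v w ≠ 0}

/-- The underlying simple graph: edges are the pairs with nonzero edge weight. -/
def wGraph {n : ℕ} (lam : Fin n → Fin n → ℝ) : SimpleGraph (Fin n) :=
  SimpleGraph.fromRel fun j k => lam j k ≠ 0

section Matchings

variable {n : ℕ} {lam : Fin n → Fin n → ℝ} {A : Finset (Fin n)} {M : Finset (Fin n × Fin n)}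

lemma mem_matchings : M ∈ matchings lam A ↔ IsMatching lam A M := by
  simp [matchings]

lemma mem_mVerts {v : Fin n} : v ∈ mVerts M ↔ ∃ e ∈ M, e.1 = v ∨ e.2 = v := by
  simp only [mVerts, Finset.mem_union, Finset.mem_image, ← exists_or, ← and_or_left]

lemma mVerts_insert (e : Fin n × Fin n) (M : Finset (Fin n × Fin n)) :
    mVerts (insert e M) = insert e.1 (insert e.2 (mVerts M)) := by
  simp only [mVerts, Finset.image_insert, Finset.insert_union, Finset.union_insert,
    Finset.insert_comm e.2]

lemma isMatching_erase_iff {i : Fin n} :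
    IsMatching lam (A.erase i) M ↔ IsMatching lam A M ∧ i ∉ mVerts M := by
  simp only [IsMatching, mem_mVerts, Finset.mem_erase]
  grind

lemma isMatching_insert_iff {e : Fin n × Fin n} (he : e ∉ M) :
    IsMatching lam A (insert e M) ↔ (e.1 < e.2 ∧ lam e.1 e.2 ≠ 0 ∧ e.1 ∈ A ∧ e.2 ∈ A) ∧
      IsMatching lam A M ∧ e.1 ∉ mVerts M ∧ e.2 ∉ mVerts M := by
  simp only [IsMatching, mem_mVerts, Finset.forall_mem_insert]
  grind

end Matchings

section VertexExpansion

variable {n : ℕ} {r : Fin n → ℝ} {lam : Fin n → Fin n → ℝ} {A : Finset (Fin n)}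
  {M : Finset (Fin n × Fin n)} {i k : Fin n}

def orderedEdge (i k : Fin n) : Fin n × Fin n := (min i k, max i k)

lemma orderedEdge_comm (i k : Fin n) : orderedEdge i k = orderedEdge k i := by
  simp [orderedEdge, min_comm, max_comm]

lemma orderedEdge_eq_self {e : Fin n × Fin n} (h : e.1 ≤ e.2) : orderedEdge e.1 e.2 = e := by
  simp [orderedEdge, h]

lemma insert_orderedEdge_fst_snd (s : Finset (Fin n)) :
    insert (orderedEdge i k).1 (insert (orderedEdge i k).2 s) = insert i (insert k s) := by
  rcases le_total i k with h | h <;> simp [orderedEdge, h, Finset.insert_comm]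

lemma lam_orderedEdge (hsym : ∀ j k, lam j k = lam k j) :
    lam (orderedEdge i k).1 (orderedEdge i k).2 = lam i k := by
  rcases le_total i k with h | h <;> simp [orderedEdge, h, hsym k i]

lemma orderedEdge_right_injective (i : Fin n) : Function.Injective (orderedEdge i) := by
  intro a b h
  simp only [orderedEdge, Prod.mk.injEq] at h
  rcases le_total i a with ha | ha <;> rcases le_total i b with hb | hb <;>
    simp_all

lemma mem_mVerts_of_orderedEdge_mem (he : orderedEdge i k ∈ M) : i ∈ mVerts M := by
  refine mem_mVerts.mpr ⟨_, he, ?_⟩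
  rcases le_total i k with hik | hik <;> simp [orderedEdge, hik]

lemma IsMatching.orderedEdge_notMem (hM : IsMatching lam ((A.erase i).erase k) M) {l : Fin n} :
    orderedEdge i l ∉ M :=
  mt mem_mVerts_of_orderedEdge_mem (isMatching_erase_iff.mp (isMatching_erase_iff.mp hM).1).2

lemma IsMatching.exists_orderedEdge_mem (hM : IsMatching lam A M) (h : i ∈ mVerts M) :
    ∃ k, orderedEdge i k ∈ M := by
  obtain ⟨e, he, rfl | rfl⟩ := mem_mVerts.mp h
  · exact ⟨e.2, (orderedEdge_eq_self (hM.1 e he).1.le).symm ▸ he⟩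
  · exact ⟨e.1, orderedEdge_comm e.2 e.1 ▸ (orderedEdge_eq_self (hM.1 e he).1.le).symm ▸ he⟩

lemma isMatching_insert_orderedEdge_iff (hsym : ∀ j k, lam j k = lam k j)
    (he : orderedEdge i k ∉ M) :
    IsMatching lam A (insert (orderedEdge i k) M) ↔
      i ∈ A ∧ (k ∈ A.erase i ∧ lam i k ≠ 0) ∧ IsMatching lam ((A.erase i).erase k) M := by
  rw [isMatching_insert_iff he, isMatching_erase_iff, isMatching_erase_iff, lam_orderedEdge hsym]
  rcases le_total i k with h | h <;> simp only [orderedEdge, h, min_eq_left, max_eq_right,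
    min_eq_right, max_eq_left, Finset.mem_erase] <;> grind

noncomputable def matchingTerm (r : Fin n → ℝ) (lam : Fin n → Fin n → ℝ) (A : Finset (Fin n))
    (M : Finset (Fin n × Fin n)) : ℝ[X] :=
  (∏ v ∈ A \ mVerts M, (X - C (r v))) * C (∏ e ∈ M, lam e.1 e.2)

lemma matchingTerm_of_notMem_mVerts (hi : i ∈ A) (hM : i ∉ mVerts M) :
    matchingTerm r lam A M = (X - C (r i)) * matchingTerm r lam (A.erase i) M := by
  rw [matchingTerm, matchingTerm, ← Finset.mul_prod_erase _ _ (Finset.mem_sdiff.mpr ⟨hi, hM⟩),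
    Finset.erase_sdiff_comm, mul_assoc]

lemma matchingTerm_insert_orderedEdge (hsym : ∀ j k, lam j k = lam k j)
    (he : orderedEdge i k ∉ M) :
    matchingTerm r lam A (insert (orderedEdge i k) M) =
      C (lam i k) * matchingTerm r lam ((A.erase i).erase k) M := by
  rw [matchingTerm, matchingTerm, mVerts_insert, insert_orderedEdge_fst_snd, Finset.prod_insert he,
    lam_orderedEdge hsym, Finset.sdiff_insert, Finset.sdiff_insert, ← Finset.erase_sdiff_comm,
    ← Finset.erase_sdiff_comm, Finset.erase_right_comm, map_mul]
  ring

lemma sum_matchingTerm_notMem_mVerts (hi : i ∈ A) :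
    ∑ M ∈ matchings lam A with i ∉ mVerts M, matchingTerm r lam A M =
      (X - C (r i)) * mu r lam (A.erase i) := by
  have hfilter : {M ∈ matchings lam A | i ∉ mVerts M} = matchings lam (A.erase i) := by
    ext M
    rw [Finset.mem_filter, mem_matchings, mem_matchings, isMatching_erase_iff]
  rw [hfilter, mu, Finset.mul_sum]
  exact Finset.sum_congr rfl fun M hM =>
    matchingTerm_of_notMem_mVerts hi (isMatching_erase_iff.mp (mem_matchings.mp hM)).2

lemma sum_matchingTerm_mem_mVerts (hsym : ∀ j k, lam j k = lam k j) (hi : i ∈ A) :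
    ∑ M ∈ matchings lam A with i ∈ mVerts M, matchingTerm r lam A M =
      ∑ k ∈ A.erase i, C (lam i k) * mu r lam ((A.erase i).erase k) := by
  rw [← Finset.sum_filter_of_ne (p := fun k => lam i k ≠ 0)
    (fun k _ h => by contrapose! h; simp [h])]
  simp only [mu, Finset.mul_sum]
  rw [Finset.sum_sigma']
  symm
  refine Finset.sum_bij (fun p _ => insert (orderedEdge i p.1) p.2) ?_ ?_ ?_ ?_
  · rintro ⟨k, M'⟩ hp
    rw [Finset.mem_sigma, Finset.mem_filter, mem_matchings] at hp
    exact Finset.mem_filter.mpr ⟨mem_matchings.mpr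
      ((isMatching_insert_orderedEdge_iff hsym hp.2.orderedEdge_notMem).mpr ⟨hi, hp.1, hp.2⟩),
      mem_mVerts_of_orderedEdge_mem (Finset.mem_insert_self _ _)⟩
  · rintro ⟨k₁, M₁⟩ h₁ ⟨k₂, M₂⟩ h₂ heq
    simp only [Finset.mem_sigma, Finset.mem_filter, mem_matchings] at h₁ h₂ heq
    have hk : k₁ = k₂ := by
      refine orderedEdge_right_injective i ?_
      rcases Finset.mem_insert.mp (heq ▸ Finset.mem_insert_self (orderedEdge i k₁) M₁) with h | h
      · exact h
      · exact absurd h h₂.2.orderedEdge_notMem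
    subst hk
    rw [← Finset.erase_insert h₁.2.orderedEdge_notMem, heq,
      Finset.erase_insert h₂.2.orderedEdge_notMem]
  · intro M hM
    rw [Finset.mem_filter, mem_matchings] at hM
    obtain ⟨k, hk⟩ := hM.1.exists_orderedEdge_mem hM.2
    have hM' := (isMatching_insert_orderedEdge_iff hsym (Finset.notMem_erase _ M)).mp
      ((Finset.insert_erase hk).symm ▸ hM.1)
    exact ⟨⟨k, M.erase (orderedEdge i k)⟩,
      Finset.mem_sigma.mpr ⟨Finset.mem_filter.mpr hM'.2.1, mem_matchings.mpr hM'.2.2⟩,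
      Finset.insert_erase hk⟩
  · rintro ⟨k, M'⟩ hp
    rw [Finset.mem_sigma, mem_matchings] at hp
    exact (matchingTerm_insert_orderedEdge hsym hp.2.orderedEdge_notMem).symm

theorem mu_eq_mul_mu_erase_add_sum (hsym : ∀ j k, lam j k = lam k j) (hi : i ∈ A) :
    mu r lam A = (X - C (r i)) * mu r lam (A.erase i) +
      ∑ k ∈ A.erase i, C (lam i k) * mu r lam ((A.erase i).erase k) := by
  rw [← sum_matchingTerm_notMem_mVerts hi, ← sum_matchingTerm_mem_mVerts hsym hi, add_comm]
  exact (Finset.sum_filter_add_sum_filter_not _ _ _).symm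

end VertexExpansion

section Paths

variable {n : ℕ} {lam : Fin n → Fin n → ℝ} {A : Finset (Fin n)} {i j : Fin n}

lemma isPathIn_iff {l : List (Fin n)} :
    IsPathIn lam A i j l ↔ l ≠ [] ∧ l.Nodup ∧ (∀ v ∈ l, v ∈ A) ∧ l.head? = some i ∧
      l.getLast? = some j ∧ l.IsChain fun u v => lam u v ≠ 0 :=
  ⟨id, id⟩

lemma isPathIn_cons_iff (hij : i ≠ j) {a : Fin n} {c : List (Fin n)} :
    IsPathIn lam A i j (a :: c) ↔
      a = i ∧ i ∈ A ∧ ∃ k, c.head? = some k ∧ lam i k ≠ 0 ∧ IsPathIn lam (A.erase i) k j c := by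
  cases c with
  | nil => simp only [isPathIn_iff]; grind
  | cons b t =>
    simp only [isPathIn_iff, ne_eq, reduceCtorEq, not_false_eq_true, List.nodup_cons,
      List.mem_cons, forall_eq_or_imp, List.head?_cons, Option.some.injEq, List.getLast?_cons_cons,
      List.isChain_cons_cons, Finset.mem_erase, true_and, exists_eq_left']
    grind

lemma isPathIn_self_iff (hj : j ∈ A) {l : List (Fin n)} : IsPathIn lam A j j l ↔ l = [j] := by
  match l with
  | [] => simp [isPathIn_iff]
  | [a] => simp only [isPathIn_iff]; grind
  | a :: b :: t =>
    refine iff_of_false ?_ (by simp)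
    simp only [isPathIn_iff, List.nodup_cons, List.head?_cons, Option.some.injEq,
      List.getLast?_cons_cons]
    rintro ⟨-, ⟨ha, -⟩, -, rfl, hlast, -⟩
    exact ha (List.mem_of_getLast? hlast)

lemma IsPathIn.head?_eq {l : List (Fin n)} (h : IsPathIn lam A i j l) : l.head? = some i :=
  h.2.2.2.1

lemma IsPathIn.start_mem {l : List (Fin n)} (h : IsPathIn lam A i j l) : i ∈ A :=
  h.2.2.1 i (List.mem_of_mem_head? h.head?_eq)

lemma setOf_isPathIn_finite (lam : Fin n → Fin n → ℝ) (A : Finset (Fin n)) (i j : Fin n) :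
    {l | IsPathIn lam A i j l}.Finite :=
  (List.finite_length_le (Fin n) n).subset fun _ hl => by simpa using hl.2.1.length_le_card

noncomputable def paths (lam : Fin n → Fin n → ℝ) (A : Finset (Fin n)) (i j : Fin n) :
    Finset (List (Fin n)) :=
  (setOf_isPathIn_finite lam A i j).toFinset

lemma mem_paths {l : List (Fin n)} : l ∈ paths lam A i j ↔ IsPathIn lam A i j l :=
  Set.Finite.mem_toFinset _

lemma finsum_mem_setOf_isPathIn {M : Type*} [AddCommMonoid M] (f : List (Fin n) → M) :
    ∑ᶠ l ∈ {l | IsPathIn lam A i j l}, f l = ∑ l ∈ paths lam A i j, f l :=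
  finsum_mem_eq_finite_toFinset_sum f _

lemma paths_self (hj : j ∈ A) : paths lam A j j = {[j]} := by
  ext l
  rw [mem_paths, isPathIn_self_iff hj, Finset.mem_singleton]

lemma sum_paths_eq_sum_neighbors {M : Type*} [AddCommMonoid M] (hi : i ∈ A) (hij : i ≠ j)
    (f : List (Fin n) → M) :
    ∑ l ∈ paths lam A i j, f l =
      ∑ k ∈ A.erase i with lam i k ≠ 0, ∑ c ∈ paths lam (A.erase i) k j, f (i :: c) := by
  rw [Finset.sum_sigma']
  refine (Finset.sum_bij (fun p _ => i :: p.2) ?_ ?_ ?_ fun _ _ => rfl).symm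
  · rintro ⟨k, c⟩ hp
    simp only [Finset.mem_sigma, Finset.mem_filter, mem_paths] at hp
    exact mem_paths.mpr ((isPathIn_cons_iff hij).mpr ⟨rfl, hi, k, hp.2.head?_eq, hp.1.2, hp.2⟩)
  · rintro ⟨k₁, c₁⟩ h₁ ⟨k₂, c₂⟩ h₂ heq
    simp only [Finset.mem_sigma, mem_paths, List.cons.injEq, true_and] at h₁ h₂ heq
    subst heq
    rw [Option.some.inj (h₁.2.head?_eq.symm.trans h₂.2.head?_eq)]
  · intro l hl
    obtain ⟨a, c, rfl⟩ := List.exists_cons_of_ne_nil (mem_paths.mp hl).1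
    obtain ⟨rfl, -, k, -, hik, hc⟩ := (isPathIn_cons_iff hij).mp (mem_paths.mp hl)
    exact ⟨⟨k, c⟩, Finset.mem_sigma.mpr
      ⟨Finset.mem_filter.mpr ⟨hc.start_mem, hik⟩, mem_paths.mpr hc⟩, rfl⟩

lemma pathWeight_cons_of_head?_eq {c : List (Fin n)} {k : Fin n} (hc : c.head? = some k) :
    pathWeight lam (i :: c) = -lam i k * pathWeight lam c := by
  obtain ⟨t, rfl⟩ : ∃ t, c = k :: t := by
    cases c with
    | nil => simp at hc
    | cons b t => exact ⟨t, by simpa using hc⟩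
  simp [pathWeight]

end Paths

section ChristoffelDarboux

variable {n : ℕ} {r : Fin n → ℝ} {lam : Fin n → Fin n → ℝ} {A : Finset (Fin n)} {i j : Fin n}

noncomputable def pathSum (r : Fin n → ℝ) (lam : Fin n → Fin n → ℝ) (A : Finset (Fin n))
    (i j : Fin n) : ℝ[X] :=
  ∑ l ∈ paths lam A i j, C (pathWeight lam l) * mu r lam (A \ l.toFinset) ^ 2

lemma pathSum_self (hj : j ∈ A) : pathSum r lam A j j = mu r lam (A.erase j) ^ 2 := by
  rw [pathSum, paths_self hj, Finset.sum_singleton]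
  simp [pathWeight, Finset.sdiff_singleton_eq_erase]

lemma pathSum_eq_sum_erase (hi : i ∈ A) (hij : i ≠ j) :
    pathSum r lam A i j = ∑ k ∈ A.erase i, C (-lam i k) * pathSum r lam (A.erase i) k j := by
  rw [pathSum, sum_paths_eq_sum_neighbors hi hij, Finset.sum_filter]
  refine Finset.sum_congr rfl fun k _ => ?_
  split_ifs with hik
  · rw [pathSum, Finset.mul_sum]
    refine Finset.sum_congr rfl fun c hc => ?_
    rw [pathWeight_cons_of_head?_eq (mem_paths.mp hc).head?_eq, List.toFinset_cons,
      Finset.sdiff_insert, ← Finset.erase_sdiff_comm, map_mul, mul_assoc]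
  · simp [not_not.mp hik]

theorem mu_erase_mul_mu_erase_sub_eq_pathSum (hsym : ∀ j k, lam j k = lam k j)
    (hi : i ∈ A) (hj : j ∈ A) (hij : i ≠ j) :
    mu r lam (A.erase i) * mu r lam (A.erase j) - mu r lam ((A.erase i).erase j) * mu r lam A =
      pathSum r lam A i j := by
  induction A using Finset.strongInduction generalizing i j with
  | H A ih =>
  set B := A.erase i with hB
  have hjB : j ∈ B := Finset.mem_erase.mpr ⟨hij.symm, hj⟩
  have hA := mu_eq_mul_mu_erase_add_sum (r := r) hsym hi
  have hAj := mu_eq_mul_mu_erase_add_sum (r := r) hsym (Finset.mem_erase.mpr ⟨hij, hi⟩)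
  rw [Finset.erase_right_comm, ← hB] at hAj
  rw [← Finset.add_sum_erase _ _ hjB] at hA
  have inductive_step : ∑ k ∈ B.erase j, C (-lam i k) * pathSum r lam B k j =
      mu r lam B * ∑ k ∈ B.erase j, C (lam i k) * mu r lam ((B.erase j).erase k) -
        mu r lam (B.erase j) * ∑ k ∈ B.erase j, C (lam i k) * mu r lam (B.erase k) := by
    rw [Finset.mul_sum, Finset.mul_sum, ← Finset.sum_sub_distrib]
    refine Finset.sum_congr rfl fun k hk => ?_
    rw [← ih B (Finset.erase_ssubset hi) (Finset.mem_of_mem_erase hk) hjB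
      (Finset.ne_of_mem_erase hk), Finset.erase_right_comm (a := k), map_neg]
    ring
  rw [pathSum_eq_sum_erase hi hij, ← Finset.add_sum_erase _ _ hjB, pathSum_self hjB,
    inductive_step, hA, hAj, map_neg]
  ring

end ChristoffelDarboux

theorem stmt_2_general (n : ℕ) (r : Fin n → ℝ) (lam : Fin n → Fin n → ℝ)
    (hsym : ∀ j k, lam j k = lam k j) (i j : Fin n) (hij : i ≠ j) :
    mu r lam (Finset.univ.erase i) * mu r lam (Finset.univ.erase j) -
        mu r lam ((Finset.univ.erase i).erase j) * mu r lam Finset.univ =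
      ∑ᶠ l ∈ {l : List (Fin n) | IsPathIn lam Finset.univ i j l},
        Polynomial.C (pathWeight lam l) * mu r lam (Finset.univ \ l.toFinset) ^ 2 := by
  rw [finsum_mem_setOf_isPathIn]
  exact mu_erase_mul_mu_erase_sub_eq_pathSum hsym (Finset.mem_univ i) (Finset.mem_univ j) hij

/-- (Christoffel–Darboux)
`μ(G∖i)·μ(G∖j) − μ(G∖{i,j})·μ(G) = ∑_{c ∈ [i→j]} λ_c · μ(G∖c)²`. -/
theorem stmt_2 (n : ℕ) (hn : 0 < n) (r : Fin n → ℝ) (lam : Fin n → Fin n → ℝ)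
    (hsym : ∀ j k, lam j k = lam k j) (hnonpos : ∀ j k, lam j k ≤ 0)
    (hdiag : ∀ i, lam i i = 0) (i j : Fin n) (hij : i ≠ j) :
    mu r lam (Finset.univ.erase i) * mu r lam (Finset.univ.erase j) -
        mu r lam ((Finset.univ.erase i).erase j) * mu r lam Finset.univ =
      ∑ᶠ l ∈ {l : List (Fin n) | IsPathIn lam Finset.univ i j l},
        Polynomial.C (pathWeight lam l) * mu r lam (Finset.univ \ l.toFinset) ^ 2 :=
  stmt_2_general n r lam hsym i j hij
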